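/- arXiv:2505.23676 — 2 statements merged into one kernel-verified Lean document; each statement's English description precedes it below -/
import Mathlib

section
/- Let E be a real inner product space, let v, w ∈ E, let λ* ∈ [0,1] be a minimizer over [0,1] of φ(λ) = ‖λv + (1−λ)w‖², and set v̄ = λ*v + (1−λ*)w. Let c₁ ∈ (0,1] and suppose u ∈ E satisfies ⟨u, v̄⟩ < c₁‖v̄‖². Then there is no λ ∈ [0,1] such that u = λv + (1−λ)w; that is, u does not lie on the segment joining w and v. -/
/-!
The aggregate `v̄` is the point of minimal norm on the segment `[w, v]`. Moving from `v̄`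
towards any other point `u` of the segment cannot decrease `‖·‖²`, and the first-order term of
this expansion gives `‖v̄‖² ≤ ⟪u, v̄⟫`. Since `c₁ ≤ 1`, this contradicts `⟪u, v̄⟫ < c₁ ‖v̄‖²`.
-/

open RealInnerProductSpace Set Filter Topology

theorem nonneg_of_forall_Ioc_nonneg_add_mul {a b : ℝ}
    (h : ∀ t ∈ Ioc (0 : ℝ) 1, 0 ≤ a + t * b) : 0 ≤ a := by
  have hlim : Tendsto (fun t : ℝ => a + t * b) (𝓝[>] 0) (𝓝 a) := by
    have hcont : Continuous fun t : ℝ => a + t * b := by fun_prop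
    simpa using (hcont.tendsto 0).mono_left nhdsWithin_le_nhds
  exact ge_of_tendsto hlim (eventually_of_mem (Ioc_mem_nhdsGT zero_lt_one) h)

theorem norm_sq_le_inner_of_isMinOn {E : Type*} [NormedAddCommGroup E] [InnerProductSpace ℝ E]
    {K : Set E} (hK : Convex ℝ K) {x y : E} (hx : x ∈ K) (hy : y ∈ K)
    (hmin : IsMinOn (fun z => ‖z‖ ^ 2) K x) : ‖x‖ ^ 2 ≤ ⟪y, x⟫ := by
  -- `‖x + t • (y - x)‖² - ‖x‖² = t * (2 * ⟪x, y - x⟫ + t * ‖y - x‖²)`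
  have hslope : ∀ t ∈ Ioc (0 : ℝ) 1, 0 ≤ 2 * ⟪x, y - x⟫ + t * ‖y - x‖ ^ 2 := by
    rintro t ⟨ht0, ht1⟩
    have h := isMinOn_iff.mp hmin _ (hK.add_smul_sub_mem hx hy ⟨ht0.le, ht1⟩)
    rw [norm_add_sq_real, real_inner_smul_right, norm_smul, mul_pow, Real.norm_eq_abs,
      sq_abs] at h
    nlinarith
  have hfirst := nonneg_of_forall_Ioc_nonneg_add_mul hslope
  rw [inner_sub_right, real_inner_self_eq_norm_sq, real_inner_comm] at hfirst
  linarith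

/-- If `λ*` minimizes `φ(λ) = ‖λ•v + (1-λ)•w‖²` over `[0,1]`, `v̄ = λ*•v + (1-λ*)•w`,
`c₁ ∈ (0,1]` and `⟪u, v̄⟫ < c₁‖v̄‖²`, then `u` is not a convex combination of `v` and `w`. -/
theorem new_subgradient_not_on_segment
    {E : Type*} [NormedAddCommGroup E] [InnerProductSpace ℝ E]
    (v w : E) (lamStar : ℝ) (hlam : lamStar ∈ Set.Icc (0 : ℝ) 1)
    (hmin : ∀ lam ∈ Set.Icc (0 : ℝ) 1,
      ‖lamStar • v + (1 - lamStar) • w‖ ^ 2 ≤ ‖lam • v + (1 - lam) • w‖ ^ 2)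
    (vbar : E) (hvbar : vbar = lamStar • v + (1 - lamStar) • w)
    (c₁ : ℝ) (hc₁ : c₁ ∈ Set.Ioc (0 : ℝ) 1)
    (u : E) (hu : ⟪u, vbar⟫ < c₁ * ‖vbar‖ ^ 2) :
    ¬ ∃ lam ∈ Set.Icc (0 : ℝ) 1, u = lam • v + (1 - lam) • w := by
  rintro ⟨lam, hlam', rfl⟩
  have hseg : segment ℝ w v = (fun θ : ℝ => θ • v + (1 - θ) • w) '' Icc 0 1 := by
    simp_rw [segment_eq_image, add_comm]
  have hvbar_mem : vbar ∈ segment ℝ w v := hseg ▸ ⟨lamStar, hlam, hvbar.symm⟩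
  have hvbar_min : IsMinOn (fun z => ‖z‖ ^ 2) (segment ℝ w v) vbar := by
    rw [hseg]
    rintro _ ⟨θ, hθ, rfl⟩
    exact hvbar ▸ hmin θ hθ
  have hu_mem : lam • v + (1 - lam) • w ∈ segment ℝ w v := hseg ▸ ⟨lam, hlam', rfl⟩
  have hle := norm_sq_le_inner_of_isMinOn (convex_segment w v) hvbar_mem hu_mem hvbar_min
  have hc : c₁ * ‖vbar‖ ^ 2 ≤ ‖vbar‖ ^ 2 := mul_le_of_le_one_left (sq_nonneg _) hc₁.2
  linarith
end

section
/- Let E be a real inner product space, let c₁ ∈ (0,1) and C₁ > 0, and let v, w ∈ E satisfy ‖v‖ ≤ C₁, ‖w‖ ≤ C₁ and ⟨v, w⟩ ≤ c₁‖w‖². Then the infimum over λ ∈ [0,1] of ‖λv + (1−λ)w‖² is at most (1 − ((1−c₁)‖w‖/(2C₁))²) · ‖w‖². -/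
/-!
Moving from `w` towards `v` by `λ` changes `‖w‖²` by `λ²‖v - w‖² + 2λ⟪v - w, w⟫`. The angle condition
makes the linear term at most `-2λ(1 - c₁)‖w‖²`, the norm bounds make the quadratic one at most
`λ²(2C₁)²`, and minimising this upper parabola over `λ` gives the stated decrease.
-/

open RealInnerProductSpace Set

section SegmentNorm

variable {E : Type*} [NormedAddCommGroup E] [InnerProductSpace ℝ E]

theorem norm_smul_add_one_sub_smul_sq (lam : ℝ) (v w : E) :
    ‖lam • v + (1 - lam) • w‖ ^ 2 = lam ^ 2 * ‖v - w‖ ^ 2 + 2 * lam * ⟪v - w, w⟫ + ‖w‖ ^ 2 := by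
  have hcomb : lam • v + (1 - lam) • w = lam • (v - w) + w := by
    rw [smul_sub, sub_smul, one_smul]
    abel
  rw [hcomb, norm_add_sq_real, norm_smul, real_inner_smul_left, mul_pow, Real.norm_eq_abs, sq_abs]
  ring

theorem norm_smul_add_one_sub_smul_sq_le {lam D δ : ℝ} {v w : E} (hlam : 0 ≤ lam)
    (hD : ‖v - w‖ ≤ D) (hinner : ⟪v - w, w⟫ ≤ -δ) :
    ‖lam • v + (1 - lam) • w‖ ^ 2 ≤ lam ^ 2 * D ^ 2 - 2 * lam * δ + ‖w‖ ^ 2 := by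
  have hsq : ‖v - w‖ ^ 2 ≤ D ^ 2 := pow_le_pow_left₀ (norm_nonneg _) hD 2
  rw [norm_smul_add_one_sub_smul_sq]
  nlinarith [mul_le_mul_of_nonneg_left hsq (sq_nonneg lam)]

/-- The step `λ = δ / D²` minimises the upper parabola of `norm_smul_add_one_sub_smul_sq_le`. -/
theorem sInf_norm_smul_add_one_sub_smul_sq_le {D δ : ℝ} {v w : E} (hD : ‖v - w‖ ≤ D)
    (hδ : 0 ≤ δ) (hδD : δ ≤ D ^ 2) (hinner : ⟪v - w, w⟫ ≤ -δ) :
    sInf ((fun lam : ℝ => ‖lam • v + (1 - lam) • w‖ ^ 2) '' Icc 0 1) ≤ ‖w‖ ^ 2 - δ ^ 2 / D ^ 2 := by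
  have hlam : δ / D ^ 2 ∈ Icc (0 : ℝ) 1 := ⟨by positivity, div_le_one_of_le₀ hδD (sq_nonneg D)⟩
  have hbdd : BddBelow ((fun lam : ℝ => ‖lam • v + (1 - lam) • w‖ ^ 2) '' Icc 0 1) :=
    ⟨0, by rintro _ ⟨lam, -, rfl⟩; positivity⟩
  refine (csInf_le hbdd (mem_image_of_mem _ hlam)).trans ?_
  refine (norm_smul_add_one_sub_smul_sq_le hlam.1 hD hinner).trans_eq ?_
  rcases eq_or_ne D 0 with rfl | hD0
  · simp
  · field_simp
    ring

end SegmentNorm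

theorem aggregate_contraction_estimate_general
    {E : Type*} [NormedAddCommGroup E] [InnerProductSpace ℝ E]
    (c₁ C₁ : ℝ) (hc₁ : c₁ ∈ Set.Ioo (0 : ℝ) 1)
    (v w : E) (hv : ‖v‖ ≤ C₁) (hw : ‖w‖ ≤ C₁) (hvw : ⟪v, w⟫ ≤ c₁ * ‖w‖ ^ 2) :
    sInf ((fun lam : ℝ => ‖lam • v + (1 - lam) • w‖ ^ 2) '' Set.Icc (0 : ℝ) 1) ≤
      (1 - ((1 - c₁) * ‖w‖ / (2 * C₁)) ^ 2) * ‖w‖ ^ 2 := by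
  obtain ⟨hc0, hc1⟩ := hc₁
  have hdiff : ‖v - w‖ ≤ 2 * C₁ := (norm_sub_le v w).trans (by linarith)
  have hw_sq : ‖w‖ ^ 2 ≤ C₁ ^ 2 := pow_le_pow_left₀ (norm_nonneg w) hw 2
  have hinner : ⟪v - w, w⟫ ≤ -((1 - c₁) * ‖w‖ ^ 2) := by
    rw [inner_sub_left, real_inner_self_eq_norm_sq]
    linarith
  have hstep := sInf_norm_smul_add_one_sub_smul_sq_le hdiff
    (mul_nonneg (by linarith) (sq_nonneg _)) (by nlinarith [sq_nonneg ‖w‖]) hinner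
  refine hstep.trans_eq ?_
  ring

/-- Contraction estimate: if `‖v‖ ≤ C₁`, `‖w‖ ≤ C₁` and `⟪v, w⟫ ≤ c₁‖w‖²` with
`c₁ ∈ (0,1)`, `C₁ > 0`, then the infimum over `λ ∈ [0,1]` of `‖λ•v + (1-λ)•w‖²`
is at most `(1 - ((1-c₁)‖w‖/(2C₁))²)‖w‖²`. -/
theorem aggregate_contraction_estimate
    {E : Type*} [NormedAddCommGroup E] [InnerProductSpace ℝ E]
    (c₁ C₁ : ℝ) (hc₁ : c₁ ∈ Set.Ioo (0 : ℝ) 1) (hC₁ : 0 < C₁)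
    (v w : E) (hv : ‖v‖ ≤ C₁) (hw : ‖w‖ ≤ C₁) (hvw : ⟪v, w⟫ ≤ c₁ * ‖w‖ ^ 2) :
    sInf ((fun lam : ℝ => ‖lam • v + (1 - lam) • w‖ ^ 2) '' Set.Icc (0 : ℝ) 1) ≤
      (1 - ((1 - c₁) * ‖w‖ / (2 * C₁)) ^ 2) * ‖w‖ ^ 2 :=
  aggregate_contraction_estimate_general c₁ C₁ hc₁ v w hv hw hvw
end
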